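/- Let φ be an Orlicz function taking only finite values, satisfying the Δ₂-condition at zero, and such that ∑_{n=n₁}^∞ φ(1/n) < ∞ for some n₁ ∈ ℕ. If (x_n) is a sequence of elements of ces_φ with ρ_φ(x_n) → ∞, then ‖x_n‖_φ → ∞. -/

import Mathlib

open scoped ENNReal
open Filter

/-- An Orlicz function: `φ : ℝ → [0,∞]` even, convex, left continuous on `ℝ₊`,
continuous at zero, with `φ 0 = 0` and `φ u → ∞` as `u → ∞`. -/
structure OrliczFunction where
  toFun : ℝ → ℝ≥0∞
  even' : ∀ u : ℝ, toFun (-u) = toFun u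
  convex' : ∀ u v t : ℝ, 0 ≤ t → t ≤ 1 →
    toFun (t * u + (1 - t) * v) ≤ ENNReal.ofReal t * toFun u + ENNReal.ofReal (1 - t) * toFun v
  map_zero' : toFun 0 = 0
  leftContinuous' : ∀ t : ℝ, 0 < t → Tendsto toFun (nhdsWithin t (Set.Iio t)) (nhds (toFun t))
  continuousAtZero' : Tendsto toFun (nhds 0) (nhds 0)
  tendsto_top' : Tendsto toFun atTop (nhds ⊤)

/-- The Cesàro mean `σx(n) = (1/n) ∑_{j=1}^n |x j|` (with `0`-based indexing). -/
noncomputable def cesaroMean (x : ℕ → ℝ) (n : ℕ) : ℝ :=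
  (∑ j ∈ Finset.range (n + 1), |x j|) / (n + 1)

/-- The modular `ρ_φ(x) = ∑_i φ(σx(i))`. -/
noncomputable def rho (φ : OrliczFunction) (x : ℕ → ℝ) : ℝ≥0∞ :=
  ∑' n : ℕ, φ.toFun (cesaroMean x n)

/-- The Cesàro–Orlicz sequence space `ces_φ`. -/
def cesOrlicz (φ : OrliczFunction) : Set (ℕ → ℝ) :=
  {x | ∃ lam : ℝ, 0 < lam ∧ rho φ (fun i => lam * x i) < ⊤}

/-- The Luxemburg norm `‖x‖_φ = inf {λ > 0 : ρ_φ(x/λ) ≤ 1}`. -/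
noncomputable def luxNorm (φ : OrliczFunction) (x : ℕ → ℝ) : ℝ :=
  sInf {lam : ℝ | 0 < lam ∧ rho φ (fun i => x i / lam) ≤ 1}

/-- The subspace `A_φ` of `ces_φ`. -/
def Aphi (φ : OrliczFunction) : Set (ℕ → ℝ) :=
  {x | x ∈ cesOrlicz φ ∧ ∀ k : ℝ, 0 < k → ∃ nk : ℕ,
    ∑' n : ℕ, φ.toFun ((k / ((nk + n + 1 : ℕ) : ℝ)) * ∑ i ∈ Finset.range (nk + n + 1), |x i|) < ⊤}

/-- `∃ n₁, ∑_{n=n₁}^∞ φ(1/n) < ∞`. -/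
def TailFinite (φ : OrliczFunction) : Prop :=
  ∃ n₁ : ℕ, ∑' n : ℕ, φ.toFun (((n₁ + n + 1 : ℕ) : ℝ)⁻¹) < ⊤

/-- The `Δ₂`-condition at zero. -/
def Delta2Zero (φ : OrliczFunction) : Prop :=
  ∃ K : ℝ, 0 < K ∧ ∃ a : ℝ, 0 < a ∧ 0 < φ.toFun a ∧
    ∀ u : ℝ, 0 ≤ u → u ≤ a → φ.toFun (2 * u) ≤ ENNReal.ofReal K * φ.toFun u

/-- `φ` takes only finite values. -/
def FiniteValued (φ : OrliczFunction) : Prop := ∀ u : ℝ, φ.toFun u ≠ ⊤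

/-!
Iterating `Δ₂(0)` gives `φ (2 ^ m * u) ≤ K ^ m * φ u` while `2 ^ m * u ≤ a`. On the rest of the sublevel set
`{φ ≤ 1}`, `u` lies in `[a / 2 ^ m, B]`, where `φ u ≥ φ (a / 2 ^ m) > 0` and `φ (2 ^ m * u) ≤ φ (2 ^ m * B) < ∞`.
Hence `φ (2 ^ m * u) ≤ D * φ u` whenever `φ u ≤ 1`, and applied to the Cesàro means this turns
`ρ_φ (x / λ) ≤ 1` with `λ < 2 ^ m` into `ρ_φ x ≤ D`: a large modular forces a large norm.
Membership in `ces_φ` matters because `luxNorm` is the junk value `sInf ∅ = 0` when no `λ` qualifies;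
for `x ∈ ces_φ` convexity, `ρ_φ (t * y) ≤ t * ρ_φ y` for `t ∈ [0, 1]`, provides one.
-/

namespace OrliczFunction

variable (φ : OrliczFunction)

theorem map_mul_le {t : ℝ} (u : ℝ) (ht₀ : 0 ≤ t) (ht₁ : t ≤ 1) :
    φ.toFun (t * u) ≤ ENNReal.ofReal t * φ.toFun u := by
  simpa [φ.map_zero'] using φ.convex' u 0 t ht₀ ht₁

theorem mono {u v : ℝ} (hu : 0 ≤ u) (huv : u ≤ v) : φ.toFun u ≤ φ.toFun v := by
  rcases (hu.trans huv).eq_or_lt with rfl | hv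
  · rw [le_antisymm huv hu]
  · calc φ.toFun u = φ.toFun (u / v * v) := by rw [div_mul_cancel₀ u hv.ne']
      _ ≤ ENNReal.ofReal (u / v) * φ.toFun v :=
          φ.map_mul_le v (div_nonneg hu hv.le) ((div_le_one hv).2 huv)
      _ ≤ φ.toFun v := mul_le_of_le_one_left' (ENNReal.ofReal_le_one.2 ((div_le_one hv).2 huv))

theorem map_two_pow_mul_le {K a : ℝ}
    (hΔ : ∀ u : ℝ, 0 ≤ u → u ≤ a → φ.toFun (2 * u) ≤ ENNReal.ofReal K * φ.toFun u) (m : ℕ)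
    {u : ℝ} (hu : 0 ≤ u) (hua : 2 ^ m * u ≤ a) :
    φ.toFun (2 ^ m * u) ≤ ENNReal.ofReal K ^ m * φ.toFun u := by
  induction m generalizing u with
  | zero => simp
  | succ m ih =>
    have h2u : 2 ^ m * (2 * u) ≤ a := by rw [pow_succ] at hua; linarith
    have hua' : u ≤ a := le_trans (le_mul_of_one_le_left hu (one_le_pow₀ one_le_two)) hua
    calc φ.toFun (2 ^ (m + 1) * u) = φ.toFun (2 ^ m * (2 * u)) := by ring_nf
      _ ≤ ENNReal.ofReal K ^ m * φ.toFun (2 * u) := ih (by positivity) h2u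
      _ ≤ ENNReal.ofReal K ^ m * (ENNReal.ofReal K * φ.toFun u) := by gcongr; exact hΔ u hu hua'
      _ = ENNReal.ofReal K ^ (m + 1) * φ.toFun u := by rw [pow_succ, mul_assoc]

theorem exists_map_two_pow_mul_le_of_le_one (hfin : FiniteValued φ) (hδ : Delta2Zero φ) (m : ℕ) :
    ∃ D : ℝ≥0∞, D ≠ ⊤ ∧ ∀ u : ℝ, 0 ≤ u → φ.toFun u ≤ 1 → φ.toFun (2 ^ m * u) ≤ D * φ.toFun u := by
  obtain ⟨K, -, a, ha, hφa, hΔ⟩ := hδ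
  obtain ⟨B, hB⟩ := eventually_atTop.1 (φ.tendsto_top'.eventually_const_lt ENNReal.one_lt_top)
  have hε : φ.toFun (a / 2 ^ m) ≠ 0 := by
    intro hε0
    have := φ.map_two_pow_mul_le hΔ m (u := a / 2 ^ m) (by positivity)
      (mul_div_cancel₀ a (by positivity)).le
    rw [mul_div_cancel₀ a (by positivity), hε0, mul_zero] at this
    exact hφa.ne' (nonpos_iff_eq_zero.1 this)
  set ε := φ.toFun (a / 2 ^ m)
  refine ⟨ENNReal.ofReal K ^ m + φ.toFun (2 ^ m * B) / ε,
    ENNReal.add_ne_top.2 ⟨ENNReal.pow_ne_top ENNReal.ofReal_ne_top, ENNReal.div_ne_top (hfin _) hε⟩,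
    fun u hu hφu => ?_⟩
  rcases le_or_gt (2 ^ m * u) a with hsmall | hlarge
  · exact (φ.map_two_pow_mul_le hΔ m hu hsmall).trans (by gcongr; exact le_self_add)
  · have huB : u ≤ B := by
      by_contra! hBu
      exact (hB u hBu.le).not_ge hφu
    have hεu : ε ≤ φ.toFun u := φ.mono (by positivity) ((div_le_iff₀' (by positivity)).2 hlarge.le)
    calc φ.toFun (2 ^ m * u) ≤ φ.toFun (2 ^ m * B) := φ.mono (by positivity) (by gcongr)
      _ = φ.toFun (2 ^ m * B) / ε * ε := (ENNReal.div_mul_cancel hε (hfin _)).symm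
      _ ≤ (ENNReal.ofReal K ^ m + φ.toFun (2 ^ m * B) / ε) * φ.toFun u := by
          gcongr; exact le_add_self

end OrliczFunction

theorem cesaroMean_nonneg (x : ℕ → ℝ) (n : ℕ) : 0 ≤ cesaroMean x n :=
  div_nonneg (Finset.sum_nonneg fun _ _ => abs_nonneg _) (by positivity)

theorem cesaroMean_const_mul (x : ℕ → ℝ) {c : ℝ} (hc : 0 ≤ c) (n : ℕ) :
    cesaroMean (fun i => c * x i) n = c * cesaroMean x n := by
  simp only [cesaroMean, abs_mul, abs_of_nonneg hc, ← Finset.mul_sum, mul_div_assoc]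

theorem rho_const_mul_le (φ : OrliczFunction) (x : ℕ → ℝ) {t : ℝ} (ht₀ : 0 ≤ t) (ht₁ : t ≤ 1) :
    rho φ (fun i => t * x i) ≤ ENNReal.ofReal t * rho φ x := by
  rw [rho, rho, ← ENNReal.tsum_mul_left]
  refine ENNReal.tsum_le_tsum fun n => ?_
  rw [cesaroMean_const_mul x ht₀]
  exact φ.map_mul_le _ ht₀ ht₁

theorem rho_div (φ : OrliczFunction) (x : ℕ → ℝ) {lam : ℝ} (hlam : 0 < lam) :
    rho φ (fun i => x i / lam) = ∑' n, φ.toFun (cesaroMean x n / lam) := by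
  simp_rw [rho, div_eq_inv_mul, cesaroMean_const_mul x (inv_nonneg.2 hlam.le)]

theorem exists_rho_div_le_one {φ : OrliczFunction} {x : ℕ → ℝ} (hx : x ∈ cesOrlicz φ) :
    ∃ lam : ℝ, 0 < lam ∧ rho φ (fun i => x i / lam) ≤ 1 := by
  obtain ⟨μ, hμ, hρ⟩ := hx
  set R := (rho φ fun i => μ * x i).toReal
  have hR : 0 ≤ R := ENNReal.toReal_nonneg
  set t := (1 + R)⁻¹
  have ht₀ : 0 ≤ t := by positivity
  have ht₁ : t ≤ 1 := inv_le_one_of_one_le₀ (by linarith)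
  refine ⟨(t * μ)⁻¹, by positivity, ?_⟩
  calc rho φ (fun i => x i / (t * μ)⁻¹) = rho φ (fun i => t * (μ * x i)) := by
        congr 1; ext i; rw [div_inv_eq_mul]; ring
    _ ≤ ENNReal.ofReal t * rho φ (fun i => μ * x i) := rho_const_mul_le φ _ ht₀ ht₁
    _ = ENNReal.ofReal (t * R) := by rw [ENNReal.ofReal_mul ht₀, ENNReal.ofReal_toReal hρ.ne]
    _ ≤ 1 := ENNReal.ofReal_le_one.2 (by rw [inv_mul_le_one₀ (by positivity)]; linarith)

theorem exists_rho_le_of_rho_div_le_one {φ : OrliczFunction} (hfin : FiniteValued φ)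
    (hδ : Delta2Zero φ) (c : ℝ) :
    ∃ D : ℝ≥0∞, D ≠ ⊤ ∧ ∀ (x : ℕ → ℝ) (lam : ℝ), 0 < lam → lam ≤ c →
      rho φ (fun i => x i / lam) ≤ 1 → rho φ x ≤ D := by
  obtain ⟨m, hm⟩ := pow_unbounded_of_one_lt c one_lt_two
  obtain ⟨D, hD, hφ⟩ := φ.exists_map_two_pow_mul_le_of_le_one hfin hδ m
  refine ⟨D, hD, fun x lam hlam hlamc hρ => ?_⟩
  rw [rho_div φ x hlam] at hρ
  have hpoint : ∀ n, φ.toFun (cesaroMean x n) ≤ D * φ.toFun (cesaroMean x n / lam) := fun n => by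
    have hs : 0 ≤ cesaroMean x n / lam := div_nonneg (cesaroMean_nonneg x n) hlam.le
    calc φ.toFun (cesaroMean x n) = φ.toFun (lam * (cesaroMean x n / lam)) := by
          rw [mul_div_cancel₀ _ hlam.ne']
      _ ≤ φ.toFun (2 ^ m * (cesaroMean x n / lam)) :=
          φ.mono (by positivity) (by gcongr; linarith)
      _ ≤ D * φ.toFun (cesaroMean x n / lam) := hφ _ hs ((ENNReal.le_tsum n).trans hρ)
  calc rho φ x ≤ ∑' n, D * φ.toFun (cesaroMean x n / lam) := ENNReal.tsum_le_tsum hpoint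
    _ = D * ∑' n, φ.toFun (cesaroMean x n / lam) := ENNReal.tsum_mul_left
    _ ≤ D := mul_le_of_le_one_right' hρ

theorem stmt_14_general (φ : OrliczFunction) (hfin : FiniteValued φ) (hδ : Delta2Zero φ)
    (xs : ℕ → ℕ → ℝ) (hmem : ∀ n, xs n ∈ cesOrlicz φ)
    (h : Tendsto (fun n => rho φ (xs n)) atTop (nhds ⊤)) :
    Tendsto (fun n => luxNorm φ (xs n)) atTop atTop := by
  refine tendsto_atTop.2 fun M => ?_
  obtain ⟨D, hD, hbound⟩ := exists_rho_le_of_rho_div_le_one hfin hδ M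
  filter_upwards [h.eventually_const_lt hD.lt_top] with n hn
  by_contra! hM
  obtain ⟨lam, ⟨hlam, hρ⟩, hlamM⟩ := exists_lt_of_csInf_lt (exists_rho_div_le_one (hmem n)) hM
  exact (hbound (xs n) lam hlam hlamM.le hρ).not_gt hn

/-- if `φ ∈ Δ₂(0)` and `ρ_φ(x_n) → ∞`, then `‖x_n‖_φ → ∞`. -/
theorem stmt_14 (φ : OrliczFunction) (hfin : FiniteValued φ) (hδ : Delta2Zero φ)
    (htail : TailFinite φ) (xs : ℕ → ℕ → ℝ) (hmem : ∀ n, xs n ∈ cesOrlicz φ)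
    (h : Tendsto (fun n => rho φ (xs n)) atTop (nhds ⊤)) :
    Tendsto (fun n => luxNorm φ (xs n)) atTop atTop :=
  stmt_14_general φ hfin hδ xs hmem h
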